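/- Let S be a Hausdorff countably compact topological semigroup (a semigroup with a Hausdorff countably compact topology in which multiplication S × S → S is jointly continuous). Then every semigroup homomorphism h : OI_n(L) → S is annihilating, i.e., h is a constant map. -/

import Mathlib

open Set Topology TopologicalSpace

universe u v

variable {L : Type u}

/-- A partial map `f : L →. L` is a finite partial order isomorphism of rank `≤ n`:
its domain is finite with at most `n` elements, and it is an order isomorphism
from its domain onto its range. -/
def IsOI [LinearOrder L] (n : ℕ) (f : L →. L) : Prop :=
  f.Dom.Finite ∧ f.Dom.ncard ≤ n ∧
    ∀ x ∈ f.Dom, ∀ y ∈ f.Dom, ∀ a b, a ∈ f x → b ∈ f y → (x ≤ y ↔ a ≤ b)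

/-- The semigroup `OI_n(L)` of finite partial order isomorphisms of rank `≤ n`. -/
def OI (L : Type u) [LinearOrder L] (n : ℕ) : Type u := {f : L →. L // IsOI n f}

theorem IsOI.comp [LinearOrder L] {n : ℕ} {f g : L →. L}
    (hf : IsOI n f) (hg : IsOI n g) : IsOI n (g.comp f) := by
  have hsub : (g.comp f).Dom ⊆ f.Dom := by
    intro x hx
    rw [PFun.mem_dom] at hx ⊢
    obtain ⟨c, hc⟩ := hx
    rw [PFun.comp_apply] at hc
    replace hc := Part.mem_bind_iff.mp hc
    obtain ⟨b, hb, -⟩ := hc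
    exact ⟨b, hb⟩
  refine ⟨hf.1.subset hsub, le_trans (Set.ncard_le_ncard hsub hf.1) hf.2.1, ?_⟩
  intro x hx y hy a b ha hb
  rw [PFun.comp_apply] at ha hb
  replace ha := Part.mem_bind_iff.mp ha
  replace hb := Part.mem_bind_iff.mp hb
  obtain ⟨u, hu, hau⟩ := ha
  obtain ⟨v, hv, hbv⟩ := hb
  have hxd : x ∈ f.Dom := (PFun.mem_dom _ _).mpr ⟨u, hu⟩
  have hyd : y ∈ f.Dom := (PFun.mem_dom _ _).mpr ⟨v, hv⟩
  have hud : u ∈ g.Dom := (PFun.mem_dom _ _).mpr ⟨a, hau⟩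
  have hvd : v ∈ g.Dom := (PFun.mem_dom _ _).mpr ⟨b, hbv⟩
  exact (hf.2.2 x hxd y hyd u v hu hv).trans (hg.2.2 u hud v hvd a b hau hbv)

/-- Multiplication on `OI_n(L)`, written in the paper's (left-to-right) convention:
`x (α * β) = (x α) β`, i.e. `α * β` is the composition `β ∘ α` of partial maps. -/
instance [LinearOrder L] {n : ℕ} : Semigroup (OI L n) where
  mul a b := ⟨b.1.comp a.1, a.2.comp b.2⟩
  mul_assoc a b c := Subtype.ext (PFun.comp_assoc c.1 b.1 a.1).symm

/-- The inverse partial map of a partial map. -/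
noncomputable def pinv (f : L →. L) : L →. L :=
  fun y => ⟨∃ x, y ∈ f x, fun h => Classical.choose h⟩

theorem pinv_spec {f : L →. L} {y b : L} (h : b ∈ pinv f y) : y ∈ f b := by
  obtain ⟨hd, hb⟩ := h
  exact hb ▸ Classical.choose_spec hd

theorem IsOI.pinv [LinearOrder L] {n : ℕ} {f : L →. L} (hf : IsOI n f) :
    IsOI n (_root_.pinv f) := by
  classical
  have hdom : (_root_.pinv f).Dom =
      (fun x => if h : (f x).Dom then (f x).get h else x) '' f.Dom := by
    ext y
    constructor
    · rintro ⟨x, hx⟩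
      have hxd : (f x).Dom := Part.dom_iff_mem.mpr ⟨y, hx⟩
      refine ⟨x, hxd, ?_⟩
      show (if h : (f x).Dom then (f x).get h else x) = y
      rw [dif_pos hxd]
      exact Part.get_eq_of_mem hx hxd
    · rintro ⟨x, hxd, rfl⟩
      have hxd' : (f x).Dom := hxd
      refine ⟨x, ?_⟩
      show (if h : (f x).Dom then (f x).get h else x) ∈ f x
      rw [dif_pos hxd']
      exact Part.get_mem hxd'
  constructor
  · rw [hdom]; exact hf.1.image _
  constructor
  · rw [hdom]
    exact le_trans (Set.ncard_image_le hf.1) hf.2.1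
  · intro y1 h1 y2 h2 b1 b2 hb1 hb2
    have e1 := pinv_spec hb1
    have e2 := pinv_spec hb2
    have d1 : b1 ∈ f.Dom := (PFun.mem_dom _ _).mpr ⟨y1, e1⟩
    have d2 : b2 ∈ f.Dom := (PFun.mem_dom _ _).mpr ⟨y2, e2⟩
    exact (hf.2.2 b1 d1 b2 d2 y1 y2 e1 e2).symm

/-- Inversion `α ↦ α⁻¹` on `OI_n(L)`: the inverse partial bijection. -/
noncomputable instance [LinearOrder L] {n : ℕ} : Inv (OI L n) :=
  ⟨fun a => ⟨_root_.pinv a.1, a.2.pinv⟩⟩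

/-- The natural partial order on the inverse semigroup `OI_n(L)`:
`a ≼ b` iff `a = b * e` for some idempotent `e`. -/
def nle [LinearOrder L] {n : ℕ} (a b : OI L n) : Prop :=
  ∃ e : OI L n, e * e = e ∧ a = b * e

/-- The up-set `↑_≼ a = {b | a ≼ b}` with respect to the natural partial order. -/
def upSet [LinearOrder L] {n : ℕ} (a : OI L n) : Set (OI L n) := {b | nle a b}


/- ===================== Auxiliary development ===================== -/

section AuxAlg

variable [LinearOrder L] {n : ℕ}

theorem auxPartMem {p : Prop} {f : p → L} {y : L} :
    (y ∈ (⟨p, f⟩ : Part L)) ↔ ∃ h : p, f h = y := Iff.rfl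

/-- The zero (empty) partial map. -/
def auxZf : L →. L := fun _ => Part.none

theorem auxZf_isOI : IsOI n (auxZf (L := L)) := by
  have hd : (auxZf (L := L)).Dom = (∅ : Set L) := by
    apply Set.eq_empty_iff_forall_notMem.mpr
    intro x hx
    exact hx
  refine ⟨?_, ?_, ?_⟩
  · rw [hd]; exact Set.finite_empty
  · rw [hd]; simp
  · intro x hx
    exact absurd hx (by rw [hd] at *; exact fun hh => hh)

/-- The zero of `OI L n`. -/
def auxZ : OI L n := ⟨auxZf, auxZf_isOI⟩

theorem auxZ_mul (a : OI L n) : auxZ * a = auxZ := by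
  apply Subtype.ext
  apply PFun.ext
  intro x y
  show y ∈ (a.1.comp auxZf) x ↔ y ∈ auxZf x
  rw [PFun.comp_apply]
  constructor
  · intro hmem
    replace hmem := Part.mem_bind_iff.mp hmem
    obtain ⟨w, hw, -⟩ := hmem
    exact absurd hw (Part.notMem_none w)
  · intro hmem
    exact absurd hmem (Part.notMem_none y)

theorem mul_auxZ (a : OI L n) : a * auxZ = auxZ := by
  apply Subtype.ext
  apply PFun.ext
  intro x y
  show y ∈ (auxZf.comp a.1) x ↔ y ∈ auxZf x
  rw [PFun.comp_apply]
  constructor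
  · intro hmem
    replace hmem := Part.mem_bind_iff.mp hmem
    obtain ⟨w, -, hw⟩ := hmem
    exact absurd hw (Part.notMem_none y)
  · intro hmem
    exact absurd hmem (Part.notMem_none y)

/-- The identity partial map on a finite set. -/
def auxE (A : Finset L) : L →. L := fun x => ⟨x ∈ A, fun _ => x⟩

theorem mem_auxE {A : Finset L} {x y : L} : y ∈ auxE A x ↔ x ∈ A ∧ y = x := by
  rw [show (y ∈ auxE A x) ↔ ∃ _h : x ∈ A, x = y from Iff.rfl]
  constructor
  · rintro ⟨hx, rfl⟩; exact ⟨hx, rfl⟩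
  · rintro ⟨hx, rfl⟩; exact ⟨hx, rfl⟩

theorem auxE_dom (A : Finset L) : (auxE A).Dom = (A : Set L) := rfl

theorem auxE_isOI {A : Finset L} (hA : A.card ≤ n) : IsOI n (auxE A) := by
  refine ⟨?_, ?_, ?_⟩
  · rw [auxE_dom]; exact A.finite_toSet
  · rw [auxE_dom, Set.ncard_coe_finset]; exact hA
  · intro x hx y hy a b ha hb
    obtain ⟨-, rfl⟩ := mem_auxE.mp ha
    obtain ⟨-, rfl⟩ := mem_auxE.mp hb
    exact Iff.rfl

/-- The unique order isomorphism between two finite subsets of the same size,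
as a function. -/
noncomputable def auxSfun (A B : Finset L) (h : A.card = B.card) (x : L) (hx : x ∈ A) : L :=
  ((B.orderIsoOfFin rfl) (Fin.cast h ((A.orderIsoOfFin rfl).symm ⟨x, hx⟩)) : L)

theorem auxSfun_mem (A B : Finset L) (h : A.card = B.card) (x : L) (hx : x ∈ A) :
    auxSfun A B h x hx ∈ B :=
  ((B.orderIsoOfFin rfl) (Fin.cast h ((A.orderIsoOfFin rfl).symm ⟨x, hx⟩))).2

theorem auxSfun_le_iff {A B : Finset L} (h : A.card = B.card) {x y : L}
    (hx : x ∈ A) (hy : y ∈ A) :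
    auxSfun A B h x hx ≤ auxSfun A B h y hy ↔ x ≤ y := by
  unfold auxSfun
  rw [Subtype.coe_le_coe, OrderIso.le_iff_le]
  have hcast : Fin.cast h ((A.orderIsoOfFin rfl).symm ⟨x, hx⟩) ≤
      Fin.cast h ((A.orderIsoOfFin rfl).symm ⟨y, hy⟩) ↔
      (A.orderIsoOfFin rfl).symm ⟨x, hx⟩ ≤ (A.orderIsoOfFin rfl).symm ⟨y, hy⟩ := by
    simp [Fin.le_def]
  rw [hcast, OrderIso.le_iff_le, Subtype.mk_le_mk]

/-- The unique order isomorphism between two finite subsets of the same size,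
as a partial map. -/
noncomputable def auxS (A B : Finset L) (h : A.card = B.card) : L →. L :=
  fun x => ⟨x ∈ A, fun hx => auxSfun A B h x hx⟩

theorem mem_auxS {A B : Finset L} {h : A.card = B.card} {x y : L} :
    y ∈ auxS A B h x ↔ ∃ hx : x ∈ A, auxSfun A B h x hx = y := Iff.rfl

theorem auxS_dom (A B : Finset L) (h : A.card = B.card) : (auxS A B h).Dom = (A : Set L) := rfl

theorem auxS_isOI {A B : Finset L} (h : A.card = B.card) (hA : A.card ≤ n) :
    IsOI n (auxS A B h) := by
  refine ⟨?_, ?_, ?_⟩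
  · rw [auxS_dom]; exact A.finite_toSet
  · rw [auxS_dom, Set.ncard_coe_finset]; exact hA
  · intro x hx y hy a b ha hb
    obtain ⟨hxA, rfl⟩ := mem_auxS.mp ha
    obtain ⟨hyA, rfl⟩ := mem_auxS.mp hb
    exact (auxSfun_le_iff h hxA hyA).symm

theorem auxSfun_comp {A B C : Finset L} (h₁ : A.card = B.card) (h₂ : B.card = C.card)
    {x : L} (hx : x ∈ A) (hw : auxSfun A B h₁ x hx ∈ B) :
    auxSfun B C h₂ (auxSfun A B h₁ x hx) hw = auxSfun A C (h₁.trans h₂) x hx := by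
  unfold auxSfun at hw ⊢
  rw [Subtype.coe_eta, OrderIso.symm_apply_apply]
  congr 1

theorem auxSfun_self (A : Finset L) (h : A.card = A.card) (x : L) (hx : x ∈ A) :
    auxSfun A A h x hx = x := by
  unfold auxSfun
  have hc : Fin.cast h ((A.orderIsoOfFin rfl).symm ⟨x, hx⟩) =
      (A.orderIsoOfFin rfl).symm ⟨x, hx⟩ := by
    apply Fin.ext; simp
  rw [hc, OrderIso.apply_symm_apply]

theorem auxS_self (A : Finset L) (h : A.card = A.card) : auxS A A h = auxE A := by
  apply PFun.ext
  intro x y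
  rw [mem_auxS, mem_auxE]
  constructor
  · rintro ⟨hx, hv⟩
    refine ⟨hx, ?_⟩
    rw [← hv, auxSfun_self A h x hx]
  · rintro ⟨hx, hv⟩
    refine ⟨hx, ?_⟩
    rw [auxSfun_self A h x hx]
    exact hv.symm

theorem auxS_comp {A B C : Finset L} (h₁ : A.card = B.card) (h₂ : B.card = C.card) :
    (auxS B C h₂).comp (auxS A B h₁) = auxS A C (h₁.trans h₂) := by
  apply PFun.ext
  intro x y
  rw [PFun.comp_apply]
  refine Part.mem_bind_iff.trans ?_
  constructor
  · rintro ⟨w, hw, hyw⟩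
    obtain ⟨hx, rfl⟩ := mem_auxS.mp hw
    obtain ⟨hwB, rfl⟩ := mem_auxS.mp hyw
    exact ⟨hx, (auxSfun_comp h₁ h₂ hx hwB).symm⟩
  · rintro ⟨hx, rfl⟩
    exact ⟨auxSfun A B h₁ x hx, ⟨hx, rfl⟩,
      ⟨auxSfun_mem A B h₁ x hx, auxSfun_comp h₁ h₂ hx (auxSfun_mem A B h₁ x hx)⟩⟩

theorem auxS_comp_disj {A B B' C : Finset L} (h₁ : A.card = B.card) (h₂ : B'.card = C.card)
    (hd : Disjoint B B') :
    (auxS B' C h₂).comp (auxS A B h₁) = auxZf := by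
  apply PFun.ext
  intro x y
  rw [PFun.comp_apply]
  refine Part.mem_bind_iff.trans ?_
  constructor
  · rintro ⟨w, hw, hyw⟩
    obtain ⟨hx, rfl⟩ := mem_auxS.mp hw
    obtain ⟨hwB', -⟩ := mem_auxS.mp hyw
    exact absurd hwB' (Finset.disjoint_left.mp hd (auxSfun_mem A B h₁ x hx))
  · intro hmem
    exact absurd hmem (Part.notMem_none y)

theorem auxE_comp_auxE (A B : Finset L) :
    (auxE B).comp (auxE A) = auxE (A ∩ B) := by
  apply PFun.ext
  intro x y
  rw [PFun.comp_apply]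
  refine Part.mem_bind_iff.trans ?_
  rw [mem_auxE]
  constructor
  · rintro ⟨w, hw, hyw⟩
    obtain ⟨hxA, rfl⟩ := mem_auxE.mp hw
    obtain ⟨hxB, rfl⟩ := mem_auxE.mp hyw
    exact ⟨Finset.mem_inter.mpr ⟨hxA, hxB⟩, rfl⟩
  · rintro ⟨hx, hv⟩
    obtain ⟨hxA, hxB⟩ := Finset.mem_inter.mp hx
    exact ⟨x, mem_auxE.mpr ⟨hxA, rfl⟩, mem_auxE.mpr ⟨hxB, hv⟩⟩

theorem comp_auxE {a : L →. L} {A : Finset L} (ha : a.Dom ⊆ (A : Set L)) :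
    a.comp (auxE A) = a := by
  apply PFun.ext
  intro x y
  rw [PFun.comp_apply]
  refine Part.mem_bind_iff.trans ?_
  constructor
  · rintro ⟨w, hw, hyw⟩
    obtain ⟨hxA, rfl⟩ := mem_auxE.mp hw
    exact hyw
  · intro hy
    have hxA : x ∈ A := ha ((PFun.mem_dom a x).mpr ⟨y, hy⟩)
    exact ⟨x, mem_auxE.mpr ⟨hxA, rfl⟩, hy⟩

/-! OI-level versions -/

noncomputable def auxEO (A : Finset L) (hA : A.card ≤ n) : OI L n :=
  ⟨auxE A, auxE_isOI hA⟩

noncomputable def auxSO (A B : Finset L) (h : A.card = B.card) (hA : A.card ≤ n) : OI L n :=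
  ⟨auxS A B h, auxS_isOI h hA⟩

theorem auxSO_mul (A B C : Finset L) (h₁ : A.card = B.card) (h₂ : B.card = C.card)
    (hA : A.card ≤ n) (hB : B.card ≤ n) :
    auxSO A B h₁ hA * auxSO B C h₂ hB = auxSO A C (h₁.trans h₂) hA :=
  Subtype.ext (auxS_comp h₁ h₂)

theorem auxSO_mul_disj (A B B' C : Finset L) (h₁ : A.card = B.card) (h₂ : B'.card = C.card)
    (hA : A.card ≤ n) (hB : B'.card ≤ n) (hd : Disjoint B B') :
    auxSO A B h₁ hA * auxSO B' C h₂ hB = auxZ :=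
  Subtype.ext (auxS_comp_disj h₁ h₂ hd)

theorem auxSO_self (A : Finset L) (h : A.card = A.card) (hA : A.card ≤ n) :
    auxSO A A h hA = auxEO A hA :=
  Subtype.ext (auxS_self A h)

theorem auxEO_mul (A : Finset L) (hA : A.card ≤ n) (x : OI L n)
    (hd : x.1.Dom ⊆ (A : Set L)) :
    auxEO A hA * x = x :=
  Subtype.ext (comp_auxE hd)

theorem auxEO_mul_auxEO (A B : Finset L) (hA : A.card ≤ n) (hB : B.card ≤ n)
    (hAB : (A ∩ B).card ≤ n) :
    auxEO A hA * auxEO B hB = auxEO (A ∩ B) hAB :=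
  Subtype.ext (auxE_comp_auxE A B)

/-! The grid of pairwise disjoint `n`-element subsets. -/

def auxBlk (f : ℕ ↪ L) (n k : ℕ) : Finset L :=
  (Finset.range n).image fun i => f (k * n + i)

theorem auxBlk_card (f : ℕ ↪ L) (n k : ℕ) : (auxBlk f n k).card = n := by
  unfold auxBlk
  rw [Finset.card_image_of_injective _ (fun i j hij => by
      have := f.injective hij; omega), Finset.card_range]

theorem auxBlk_disjoint (f : ℕ ↪ L) {n k m : ℕ} (hkm : k ≠ m) :
    Disjoint (auxBlk f n k) (auxBlk f n m) := by
  rw [Finset.disjoint_left]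
  intro x hx hx'
  unfold auxBlk at hx hx'
  rw [Finset.mem_image] at hx hx'
  obtain ⟨i, hi, hfi⟩ := hx
  obtain ⟨j, hj, hfj⟩ := hx'
  rw [Finset.mem_range] at hi hj
  have heq : k * n + i = m * n + j := f.injective (hfi.trans hfj.symm)
  have hn0 : 0 < n := Nat.lt_of_le_of_lt (Nat.zero_le i) hi
  have h1 : (k * n + i) / n = k := by
    rw [Nat.mul_comm k n, Nat.mul_add_div hn0, Nat.div_eq_of_lt hi, Nat.add_zero]
  have h2 : (m * n + j) / n = m := by
    rw [Nat.mul_comm m n, Nat.mul_add_div hn0, Nat.div_eq_of_lt hj, Nat.add_zero]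
  rw [heq, h2] at h1
  exact hkm h1.symm

noncomputable def auxSg (f : ℕ ↪ L) (n : ℕ) (k m : ℕ) : OI L n :=
  auxSO (auxBlk f n k) (auxBlk f n m)
    (by rw [auxBlk_card, auxBlk_card]) (le_of_eq (auxBlk_card f n k))

theorem auxSg_mul (f : ℕ ↪ L) (n : ℕ) (k m l : ℕ) :
    auxSg f n k m * auxSg f n m l = auxSg f n k l := by
  unfold auxSg
  rw [auxSO_mul]

theorem auxSg_mul_ne (f : ℕ ↪ L) (n : ℕ) {k m m' l : ℕ} (hmm : m ≠ m') :
    auxSg f n k m * auxSg f n m' l = auxZ := by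
  unfold auxSg
  rw [auxSO_mul_disj]
  exact auxBlk_disjoint f hmm

theorem auxSg_diag (f : ℕ ↪ L) (n : ℕ) (k : ℕ) :
    auxSg f n k k = auxEO (auxBlk f n k) (le_of_eq (auxBlk_card f n k)) := by
  unfold auxSg
  rw [auxSO_self]

end AuxAlg

/- ===================== Topological auxiliary lemmas ===================== -/

section AuxTop

variable {S : Type v} [TopologicalSpace S]

theorem auxCluster
    (hcc : ∀ U : ℕ → Set S, (∀ i, IsOpen (U i)) → (⋃ i, U i) = Set.univ →
      ∃ F : Finset ℕ, (⋃ i ∈ F, U i) = Set.univ)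
    (d : ℕ → S) :
    ∃ s : S, ∀ W : Set S, IsOpen W → s ∈ W → ∀ m : ℕ, ∃ k, m ≤ k ∧ d k ∈ W := by
  by_contra hno
  push_neg at hno
  have hUopen : ∀ m : ℕ, IsOpen ((closure (d '' Set.Ici m))ᶜ) :=
    fun m => isClosed_closure.isOpen_compl
  have hcover : (⋃ m, (closure (d '' Set.Ici m))ᶜ) = Set.univ := by
    apply Set.eq_univ_of_forall
    intro s
    obtain ⟨W, hWopen, hsW, m, hm⟩ := hno s
    refine Set.mem_iUnion.mpr ⟨m, ?_⟩
    intro hmem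
    obtain ⟨w, hwW, hwim⟩ := mem_closure_iff.mp hmem W hWopen hsW
    obtain ⟨k, hk, rfl⟩ := hwim
    exact hm k hk hwW
  obtain ⟨F, hF⟩ := hcc _ hUopen hcover
  have hN : d (F.sup id) ∈ ⋃ i ∈ F, (closure (d '' Set.Ici i))ᶜ := by
    rw [hF]; exact Set.mem_univ _
  obtain ⟨i, hiF, hdi⟩ := Set.mem_iUnion₂.mp hN
  exact hdi (subset_closure ⟨F.sup id, Finset.le_sup (f := id) hiF, rfl⟩)

theorem auxJC [Mul S] [ContinuousMul S] {a b : S} {W : Set S} (hW : IsOpen W)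
    (hab : a * b ∈ W) :
    ∃ O₁ O₂ : Set S, IsOpen O₁ ∧ IsOpen O₂ ∧ a ∈ O₁ ∧ b ∈ O₂ ∧
      ∀ x ∈ O₁, ∀ y ∈ O₂, x * y ∈ W := by
  have hopen : IsOpen ((fun p : S × S => p.1 * p.2) ⁻¹' W) :=
    continuous_mul.isOpen_preimage W hW
  obtain ⟨O₁, O₂, h₁, h₂, ha, hb, hsub⟩ := isOpen_prod_iff.mp hopen a b hab
  exact ⟨O₁, O₂, h₁, h₂, ha, hb, fun x hx y hy =>
    hsub (show (x, y) ∈ O₁ ×ˢ O₂ from Set.mem_prod.mpr ⟨hx, hy⟩)⟩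

theorem auxForcing [T2Space S] {p z : S} (h : ∀ W : Set S, IsOpen W → p ∈ W → z ∈ W) :
    p = z := by
  by_contra hne
  obtain ⟨U, V, hU, hV, hpU, hzV, hUV⟩ := t2_separation hne
  exact Set.disjoint_left.mp hUV (h U hU hpU) hzV

theorem auxExtract {P : ℕ → Prop} (hP : ∀ m, ∃ k, m ≤ k ∧ P k) :
    ∃ φ : ℕ → ℕ, StrictMono φ ∧ ∀ i, P (φ i) := by
  choose g hg1 hg2 using hP
  refine ⟨fun i => Nat.rec (g 0) (fun _ prev => g (prev + 1)) i, ?_, ?_⟩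
  · apply strictMono_nat_of_lt_succ
    intro i
    exact Nat.lt_of_succ_le (hg1 _)
  · intro i
    cases i with
    | zero => exact hg2 0
    | succ j => exact hg2 _

theorem auxLeApply {φ : ℕ → ℕ} (hφ : StrictMono φ) : ∀ i, i ≤ φ i := by
  intro i
  induction i with
  | zero => exact Nat.zero_le _
  | succ j ih => exact Nat.succ_le_of_lt (Nat.lt_of_le_of_lt ih (hφ (Nat.lt_succ_self j)))

variable [Semigroup S] [T2Space S] [ContinuousMul S]

theorem auxUTendsto
    (hcc : ∀ U : ℕ → Set S, (∀ i, IsOpen (U i)) → (⋃ i, U i) = Set.univ →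
      ∃ F : Finset ℕ, (⋃ i ∈ F, U i) = Set.univ)
    (uu : ℕ → S) (z : S)
    (hidem : ∀ k, uu k * uu k = uu k)
    (horth : ∀ k m, k ≠ m → uu k * uu m = z) :
    ∀ W : Set S, IsOpen W → z ∈ W → ∃ M, ∀ k, M ≤ k → uu k ∈ W := by
  intro W hW hzW
  by_contra hno
  push_neg at hno
  obtain ⟨φ, hφmono, hφ⟩ := auxExtract hno
  obtain ⟨s, hs⟩ := auxCluster hcc (fun i => uu (φ i))
  have hss : s * s = z := by
    apply auxForcing
    intro W' hW' hmem
    obtain ⟨O₁, O₂, hO₁, hO₂, hs₁, hs₂, hprod⟩ := auxJC hW' hmem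
    obtain ⟨k₁, -, hk₁⟩ := hs (O₁ ∩ O₂) (hO₁.inter hO₂) ⟨hs₁, hs₂⟩ 0
    obtain ⟨k₂, hk₂ge, hk₂⟩ := hs (O₁ ∩ O₂) (hO₁.inter hO₂) ⟨hs₁, hs₂⟩ (k₁ + 1)
    have hne : φ k₁ ≠ φ k₂ := fun he => by
      have := hφmono.injective he; omega
    have := hprod _ hk₁.1 _ hk₂.2
    rwa [horth _ _ hne] at this
  obtain ⟨O₁, O₂, hO₁, hO₂, hs₁, hs₂, hprod⟩ := auxJC hW (by rw [hss]; exact hzW)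
  obtain ⟨k, -, hk⟩ := hs (O₁ ∩ O₂) (hO₁.inter hO₂) ⟨hs₁, hs₂⟩ 0
  have := hprod _ hk.1 _ hk.2
  rw [hidem (φ k)] at this
  exact hφ k this

theorem auxCTendsto
    (hcc : ∀ U : ℕ → Set S, (∀ i, IsOpen (U i)) → (⋃ i, U i) = Set.univ →
      ∃ F : Finset ℕ, (⋃ i ∈ F, U i) = Set.univ)
    (uu c : ℕ → S) (z : S)
    (hu : ∀ W : Set S, IsOpen W → z ∈ W → ∃ M, ∀ k, M ≤ k → uu k ∈ W)
    (huc : ∀ k, uu (k + 1) * c k = c k)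
    (hzc : ∀ k, z * c k = z) :
    ∀ W : Set S, IsOpen W → z ∈ W → ∃ M, ∀ k, M ≤ k → c k ∈ W := by
  intro W hW hzW
  by_contra hno
  push_neg at hno
  obtain ⟨φ, hφmono, hφ⟩ := auxExtract hno
  obtain ⟨y, hy⟩ := auxCluster hcc (fun i => c (φ i))
  have hzy : z * y = z := by
    apply auxForcing
    intro W' hW' hmem
    have hop : IsOpen ((fun b => z * b) ⁻¹' W') :=
      (continuous_mul_left z).isOpen_preimage _ hW'
    obtain ⟨k, -, hk⟩ := hy _ hop hmem 0
    have : z * c (φ k) ∈ W' := hk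
    rwa [hzc (φ k)] at this
  obtain ⟨O₁, O₂, hO₁, hO₂, hz₁, hy₂, hprod⟩ := auxJC hW (by rw [hzy]; exact hzW)
  obtain ⟨M, hM⟩ := hu O₁ hO₁ hz₁
  obtain ⟨k, hkM, hk⟩ := hy O₂ hO₂ hy₂ M
  have h1 : uu (φ k + 1) ∈ O₁ := hM _ (le_trans (le_trans hkM (auxLeApply hφmono k)) (Nat.le_succ _))
  have := hprod _ h1 _ hk
  rw [huc (φ k)] at this
  exact hφ k this

theorem auxBTendsto
    (hcc : ∀ U : ℕ → Set S, (∀ i, IsOpen (U i)) → (⋃ i, U i) = Set.univ →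
      ∃ F : Finset ℕ, (⋃ i ∈ F, U i) = Set.univ)
    (uu b : ℕ → S) (z : S)
    (hu : ∀ W : Set S, IsOpen W → z ∈ W → ∃ M, ∀ k, M ≤ k → uu k ∈ W)
    (hbu : ∀ k, b k * uu (k + 1) = b k)
    (hbz : ∀ k, b k * z = z) :
    ∀ W : Set S, IsOpen W → z ∈ W → ∃ M, ∀ k, M ≤ k → b k ∈ W := by
  intro W hW hzW
  by_contra hno
  push_neg at hno
  obtain ⟨φ, hφmono, hφ⟩ := auxExtract hno
  obtain ⟨y, hy⟩ := auxCluster hcc (fun i => b (φ i))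
  have hyz : y * z = z := by
    apply auxForcing
    intro W' hW' hmem
    have hop : IsOpen ((fun t => t * z) ⁻¹' W') :=
      (continuous_mul_right z).isOpen_preimage _ hW'
    obtain ⟨k, -, hk⟩ := hy _ hop hmem 0
    have : b (φ k) * z ∈ W' := hk
    rwa [hbz (φ k)] at this
  obtain ⟨O₁, O₂, hO₁, hO₂, hy₁, hz₂, hprod⟩ := auxJC hW (by rw [hyz]; exact hzW)
  obtain ⟨M, hM⟩ := hu O₂ hO₂ hz₂
  obtain ⟨k, hkM, hk⟩ := hy O₁ hO₁ hy₁ M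
  have h2 : uu (φ k + 1) ∈ O₂ := hM _ (le_trans (le_trans hkM (auxLeApply hφmono k)) (Nat.le_succ _))
  have := hprod _ hk _ h2
  rw [hbu (φ k)] at this
  exact hφ k this

end AuxTop

/-- Every semigroup homomorphism from `OI_n(L)` to a Hausdorff
countably compact topological semigroup (jointly continuous multiplication) is
annihilating, i.e. constant. -/
theorem hom_into_countably_compact_topological_semigroup_is_constant
    (L : Type u) [LinearOrder L] [Infinite L] (n : ℕ) (hn : 0 < n)
    {S : Type v} [Semigroup S] [TopologicalSpace S] [T2Space S] [ContinuousMul S]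
    (hcc : ∀ U : ℕ → Set S, (∀ i, IsOpen (U i)) → (⋃ i, U i) = Set.univ →
      ∃ F : Finset ℕ, (⋃ i ∈ F, U i) = Set.univ)
    (h : OI L n → S) (hhom : ∀ a b : OI L n, h (a * b) = h a * h b) :
    ∀ a b : OI L n, h a = h b := by
  classical
  set f : ℕ ↪ L := Infinite.natEmbedding L with hf
  -- basic absorption facts for the image of the zero
  have hz_left : ∀ s : OI L n, h auxZ * h s = h auxZ := fun s => by
    rw [← hhom, auxZ_mul]
  have hz_right : ∀ s : OI L n, h s * h auxZ = h auxZ := fun s => by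
    rw [← hhom, mul_auxZ]
  -- Key topological step : the image of the top idempotent is the image of zero
  have key : h (auxSg f n 0 0) = h auxZ := by
    by_contra hne
    have hUidem : ∀ k, h (auxSg f n k k) * h (auxSg f n k k) = h (auxSg f n k k) :=
      fun k => by rw [← hhom, auxSg_mul]
    have hUorth : ∀ k m, k ≠ m → h (auxSg f n k k) * h (auxSg f n m m) = h auxZ :=
      fun k m hkm => by rw [← hhom, auxSg_mul_ne f n hkm]
    have hu := auxUTendsto hcc (fun k => h (auxSg f n k k)) (h auxZ) hUidem hUorth
    have hc := auxCTendsto hcc (fun k => h (auxSg f n k k))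
      (fun k => h (auxSg f n (k + 1) 0)) (h auxZ) hu
      (fun k => by rw [← hhom, auxSg_mul]) (fun k => hz_left _)
    have hb := auxBTendsto hcc (fun k => h (auxSg f n k k))
      (fun k => h (auxSg f n 0 (k + 1))) (h auxZ) hu
      (fun k => by rw [← hhom, auxSg_mul]) (fun k => hz_right _)
    have hW : IsOpen ({h (auxSg f n 0 0)}ᶜ : Set S) := isOpen_compl_singleton
    have hzW : h auxZ ∈ ({h (auxSg f n 0 0)}ᶜ : Set S) :=
      Set.mem_compl_singleton_iff.mpr (Ne.symm hne)
    have hzz : h (auxZ : OI L n) * h auxZ = h auxZ := hz_left _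
    obtain ⟨O₁, O₂, hO₁, hO₂, h1, h2, hprod⟩ := auxJC hW (by rw [hzz]; exact hzW)
    obtain ⟨M₁, hM₁⟩ := hb O₁ hO₁ h1
    obtain ⟨M₂, hM₂⟩ := hc O₂ hO₂ h2
    have hmem := hprod _ (hM₁ (max M₁ M₂) (le_max_left _ _)) _
      (hM₂ (max M₁ M₂) (le_max_right _ _))
    rw [← hhom, auxSg_mul] at hmem
    exact hmem rfl
  -- Every idempotent of rank exactly n is sent to the zero
  have hEn : ∀ B : Finset L, ∀ hBn : B.card = n, ∀ hB : B.card ≤ n,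
      h (auxEO B hB) = h auxZ := by
    intro B hBn hB
    have hc1 : B.card = (auxBlk f n 0).card := by rw [hBn, auxBlk_card]
    have e1 : auxSO B (auxBlk f n 0) hc1 hB *
        auxSO (auxBlk f n 0) B hc1.symm (le_of_eq (auxBlk_card f n 0)) = auxEO B hB := by
      rw [auxSO_mul, auxSO_self]
    have e2 : auxSg f n 0 0 *
        auxSO (auxBlk f n 0) B hc1.symm (le_of_eq (auxBlk_card f n 0)) =
        auxSO (auxBlk f n 0) B hc1.symm (le_of_eq (auxBlk_card f n 0)) := by
      rw [auxSg_diag]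
      apply auxEO_mul
      intro t ht
      exact ht
    calc h (auxEO B hB)
        = h (auxSO B (auxBlk f n 0) hc1 hB * (auxSg f n 0 0 *
            auxSO (auxBlk f n 0) B hc1.symm (le_of_eq (auxBlk_card f n 0)))) := by
          rw [e2, e1]
      _ = h (auxSO B (auxBlk f n 0) hc1 hB) * (h (auxSg f n 0 0) *
            h (auxSO (auxBlk f n 0) B hc1.symm (le_of_eq (auxBlk_card f n 0)))) := by
          rw [hhom, hhom]
      _ = h (auxSO B (auxBlk f n 0) hc1 hB) * (h auxZ *
            h (auxSO (auxBlk f n 0) B hc1.symm (le_of_eq (auxBlk_card f n 0)))) := by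
          rw [key]
      _ = h (auxSO B (auxBlk f n 0) hc1 hB) * h auxZ := by rw [hz_left]
      _ = h auxZ := hz_right _
  -- Every idempotent of rank at most n is sent to the zero
  have hEle : ∀ B : Finset L, ∀ hB : B.card ≤ n, h (auxEO B hB) = h auxZ := by
    intro B hB
    obtain ⟨B₁, hBB₁, hB₁⟩ := Infinite.exists_superset_card_eq B n hB
    obtain ⟨C, hB₁C, hC⟩ := Infinite.exists_superset_card_eq B₁ (n + (n - B.card))
      (by omega)
    have hdisj : Disjoint B (C \ B₁) := by
      rw [Finset.disjoint_left]
      intro x hx hx'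
      exact (Finset.mem_sdiff.mp hx').2 (hBB₁ hx)
    have hQcard : (B ∪ (C \ B₁)).card = n := by
      rw [Finset.card_union_of_disjoint hdisj, Finset.card_sdiff_of_subset hB₁C, hC, hB₁]
      omega
    have hint : B₁ ∩ (B ∪ (C \ B₁)) = B := by
      ext x
      simp only [Finset.mem_inter, Finset.mem_union, Finset.mem_sdiff]
      constructor
      · rintro ⟨hx1, hx2 | ⟨hxC, hxn⟩⟩
        · exact hx2
        · exact absurd hx1 hxn
      · intro hx
        exact ⟨hBB₁ hx, Or.inl hx⟩
    have heq : auxEO B₁ (le_of_eq hB₁) * auxEO (B ∪ (C \ B₁)) (le_of_eq hQcard) =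
        auxEO B hB := by
      apply Subtype.ext
      show (auxE (B ∪ (C \ B₁))).comp (auxE B₁) = auxE B
      rw [auxE_comp_auxE, hint]
    calc h (auxEO B hB)
        = h (auxEO B₁ (le_of_eq hB₁)) * h (auxEO (B ∪ (C \ B₁)) (le_of_eq hQcard)) := by
          rw [← hhom, heq]
      _ = h auxZ * h auxZ := by
          rw [hEn B₁ hB₁ (le_of_eq hB₁), hEn (B ∪ (C \ B₁)) hQcard (le_of_eq hQcard)]
      _ = h auxZ := hz_left _
  -- Every element is sent to the zero
  have hall : ∀ x : OI L n, h x = h auxZ := by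
    intro x
    have hfin : x.1.Dom.Finite := x.2.1
    have hcard : hfin.toFinset.card ≤ n := by
      have h2 := x.2.2.1
      rwa [Set.ncard_eq_toFinset_card _ hfin] at h2
    have hdec : auxEO hfin.toFinset hcard * x = x := by
      apply auxEO_mul
      rw [Set.Finite.coe_toFinset]
    calc h x = h (auxEO hfin.toFinset hcard * x) := by rw [hdec]
      _ = h (auxEO hfin.toFinset hcard) * h x := hhom _ _
      _ = h auxZ * h x := by rw [hEle]
      _ = h auxZ := hz_left x
  intro a b
  rw [hall a, hall b]
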